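/- Let (T, q) be a classical solution of the Guyer–Krumhansl system on (0,l) with boundary conditions q(0,t) = q(l,t) = 0, let F(t) := (ρc/2)∫_0^l (∫_x^l T(s,t) ds)² dx + (ρc μ²/2)∫_0^l T(x,t)² dx + τ_q ∫_0^l q(x,t)(∫_x^l T(s,t) ds) dx, let 𝓛(t) := (2l² + 2μ² + τ_q k/(ρc)) E(t) + F(t), let C_T(t) := (μ² ∂_x q(0,t) − k T(0,t)) ∫_0^l T(s,t) ds, let β := min(2k/(ρc), 4(l² + μ²)/τ_q) and ω := β/(3l² + 3μ² + 2τ_q k/(ρc)). Then 𝓛 is differentiable and for all t ≥ 0, 𝓛'(t) ≤ −ω 𝓛(t) + |C_T(t)|. -/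

import Mathlib

open Set MeasureTheory intervalIntegral

/-- A classical solution of the one-dimensional Guyer–Krumhansl system on `(0, l)`:
`T` is the temperature, `q` the heat flux, and `Tt, Tx, qt, qx, qxx` are the
corresponding partial derivatives (continuous on `[0,l] × [0,∞)`), satisfying
`ρ c T_t + q_x = 0` and `τ_q q_t + q − μ² q_xx + k T_x = 0` on `(0,l) × (0,∞)`,
with adiabatic boundary conditions `q(0,t) = q(l,t) = 0` for all `t ≥ 0`. -/
structure IsGKSolution (l ρ c τq μ2 k : ℝ)
    (T q Tt Tx qt qx qxx : ℝ → ℝ → ℝ) : Prop where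
  contT : ContinuousOn (fun p : ℝ × ℝ => T p.1 p.2) (Icc (0:ℝ) l ×ˢ Ici (0:ℝ))
  contq : ContinuousOn (fun p : ℝ × ℝ => q p.1 p.2) (Icc (0:ℝ) l ×ˢ Ici (0:ℝ))
  hTt : ∀ x ∈ Icc (0:ℝ) l, ∀ t ∈ Ici (0:ℝ),
    HasDerivWithinAt (fun s => T x s) (Tt x t) (Ici (0:ℝ)) t
  hTx : ∀ x ∈ Icc (0:ℝ) l, ∀ t ∈ Ici (0:ℝ),
    HasDerivWithinAt (fun y => T y t) (Tx x t) (Icc (0:ℝ) l) x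
  hqt : ∀ x ∈ Icc (0:ℝ) l, ∀ t ∈ Ici (0:ℝ),
    HasDerivWithinAt (fun s => q x s) (qt x t) (Ici (0:ℝ)) t
  hqx : ∀ x ∈ Icc (0:ℝ) l, ∀ t ∈ Ici (0:ℝ),
    HasDerivWithinAt (fun y => q y t) (qx x t) (Icc (0:ℝ) l) x
  hqxx : ∀ x ∈ Icc (0:ℝ) l, ∀ t ∈ Ici (0:ℝ),
    HasDerivWithinAt (fun y => qx y t) (qxx x t) (Icc (0:ℝ) l) x
  contTt : ContinuousOn (fun p : ℝ × ℝ => Tt p.1 p.2) (Icc (0:ℝ) l ×ˢ Ici (0:ℝ))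
  contTx : ContinuousOn (fun p : ℝ × ℝ => Tx p.1 p.2) (Icc (0:ℝ) l ×ˢ Ici (0:ℝ))
  contqt : ContinuousOn (fun p : ℝ × ℝ => qt p.1 p.2) (Icc (0:ℝ) l ×ˢ Ici (0:ℝ))
  contqx : ContinuousOn (fun p : ℝ × ℝ => qx p.1 p.2) (Icc (0:ℝ) l ×ˢ Ici (0:ℝ))
  contqxx : ContinuousOn (fun p : ℝ × ℝ => qxx p.1 p.2) (Icc (0:ℝ) l ×ˢ Ici (0:ℝ))
  pde1 : ∀ x ∈ Ioo (0:ℝ) l, ∀ t ∈ Ioi (0:ℝ), ρ * c * Tt x t + qx x t = 0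
  pde2 : ∀ x ∈ Ioo (0:ℝ) l, ∀ t ∈ Ioi (0:ℝ),
    τq * qt x t + q x t - μ2 * qxx x t + k * Tx x t = 0
  bc0 : ∀ t : ℝ, 0 ≤ t → q 0 t = 0
  bcl : ∀ t : ℝ, 0 ≤ t → q l t = 0

/-- The functional energy `E(t) = (ρc/2)∫₀ˡ T² dx + (τ_q/(2k))∫₀ˡ q² dx`. -/
noncomputable def gkEnergy (l ρ c τq k : ℝ) (T q : ℝ → ℝ → ℝ) (t : ℝ) : ℝ :=
  ρ * c / 2 * (∫ x in (0:ℝ)..l, (T x t) ^ 2)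
    + τq / (2 * k) * (∫ x in (0:ℝ)..l, (q x t) ^ 2)

/-- The auxiliary functional
`F(t) = (ρc/2)∫₀ˡ (∫ₓˡ T ds)² dx + (ρcμ²/2)∫₀ˡ T² dx + τ_q ∫₀ˡ q (∫ₓˡ T ds) dx`. -/
noncomputable def gkF (l ρ c τq μ2 : ℝ) (T q : ℝ → ℝ → ℝ) (t : ℝ) : ℝ :=
  ρ * c / 2 * (∫ x in (0:ℝ)..l, (∫ s in x..l, T s t) ^ 2)
    + ρ * c * μ2 / 2 * (∫ x in (0:ℝ)..l, (T x t) ^ 2)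
    + τq * (∫ x in (0:ℝ)..l, q x t * (∫ s in x..l, T s t))

/-- The boundary term `C_T(t) = (μ² ∂ₓq(0,t) − k T(0,t)) ∫₀ˡ T(s,t) ds`. -/
noncomputable def gkCT (l μ2 k : ℝ) (T qx : ℝ → ℝ → ℝ) (t : ℝ) : ℝ :=
  (μ2 * qx 0 t - k * T 0 t) * ∫ s in (0:ℝ)..l, T s t

/-- The Lyapunov functional `𝓛(t) = (2l² + 2μ² + τ_q k/(ρc)) E(t) + F(t)`. -/
noncomputable def gkL (l ρ c τq μ2 k : ℝ) (T q : ℝ → ℝ → ℝ) (t : ℝ) : ℝ :=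
  (2 * l ^ 2 + 2 * μ2 + τq * k / (ρ * c)) * gkEnergy l ρ c τq k T q t
    + gkF l ρ c τq μ2 T q t

/-!
Differentiating under the integral sign and substituting the two equations turns `E'` and `F'`
into a dissipative bulk term plus the `x`-derivative of a flux. With `u(x) = ∫ₓˡ T`,
`E' = -(1/k)∫ (q² + μ² q_x²) + ∫ ∂ₓ((μ²/k) q q_x - T q)` and
`F' = -k∫ T² + (τ_q/ρc)∫ q² + ∫ ∂ₓ(μ² q_x u - k T u)`.
The boundary conditions kill the first flux and turn the second into `-C_T`, so `𝓛' + C_T` is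
bounded by `-k∫ T² - (2(l²+μ²)/k)∫ q² ≤ -β E`. Conversely, the Poincaré-type bound
`∫ u² ≤ l² ∫ T²` and Young's inequality give `F ≤ (l² + μ² + τ_q k/ρc) E`, hence
`𝓛 ≤ (3l² + 3μ² + 2τ_q k/ρc) E = (β/ω) E`.
-/

open Filter Topology

theorem hasDerivWithinAt_intervalIntegral_Ici {f f' : ℝ → ℝ → ℝ} {a b t₁ t₀ : ℝ}
    (hab : a ≤ b) (ht₀ : t₁ ≤ t₀)
    (hf : ∀ x ∈ Icc a b, ∀ t ∈ Ici t₁, HasDerivWithinAt (f x) (f' x t) (Ici t₁) t)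
    (hfc : ContinuousOn (fun p : ℝ × ℝ => f p.1 p.2) (Icc a b ×ˢ Ici t₁))
    (hf'c : ContinuousOn (fun p : ℝ × ℝ => f' p.1 p.2) (Icc a b ×ˢ Ici t₁)) :
    HasDerivWithinAt (fun t => ∫ x in a..b, f x t) (∫ x in a..b, f' x t₀) (Ici t₁) t₀ := by
  obtain ⟨C, hC⟩ := (isCompact_Icc.prod isCompact_Icc).exists_bound_of_continuousOn
    (hf'c.mono (prod_mono subset_rfl (Icc_subset_Ici_self : Icc t₁ (t₀ + 1) ⊆ Ici t₁)))
  have hIoc : uIoc a b ⊆ Icc a b := by rw [uIoc_of_le hab]; exact Ioc_subset_Icc_self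
  have hfc_x : ∀ t ∈ Ici t₁, IntervalIntegrable (fun x => f x t) volume a b := fun t ht =>
    (hfc.uncurry_right t ht).intervalIntegrable_of_Icc hab
  -- the mean value theorem bounds every difference quotient by `C`
  have hslope : ∀ x ∈ Icc a b, ∀ s ∈ Icc t₁ (t₀ + 1), s ≠ t₀ → ‖slope (f x) t₀ s‖ ≤ C := by
    intro x hx s hs hne
    have hmvt := (convex_Icc t₁ (t₀ + 1)).norm_image_sub_le_of_norm_hasDerivWithin_le
      (fun t ht => (hf x hx t ht.1).mono Icc_subset_Ici_self)
      (fun t ht => hC (x, t) ⟨hx, ht⟩) ⟨ht₀, by linarith⟩ hs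
    rw [slope_def_field, norm_div]
    exact div_le_of_le_mul₀ (norm_nonneg _) ((norm_nonneg _).trans (hC (x, s) ⟨hx, hs⟩)) hmvt
  rw [hasDerivWithinAt_iff_tendsto_slope]
  have hnear : ∀ᶠ s in 𝓝[Ici t₁ \ {t₀}] t₀, s ∈ Icc t₁ (t₀ + 1) \ {t₀} := by
    filter_upwards [self_mem_nhdsWithin,
      nhdsWithin_le_nhds (Iic_mem_nhds (lt_add_one t₀))] with s hs hs'
    exact ⟨⟨hs.1, hs'⟩, hs.2⟩
  have hlim : Tendsto (fun s => ∫ x in a..b, slope (f x) t₀ s)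
      (𝓝[Ici t₁ \ {t₀}] t₀) (𝓝 (∫ x in a..b, f' x t₀)) := by
    refine tendsto_integral_filter_of_dominated_convergence (fun _ => C) ?_ ?_
      intervalIntegrable_const ?_
    · filter_upwards [self_mem_nhdsWithin] with s hs
      simp only [slope_def_field]
      rw [uIoc_of_le hab]
      exact (((hfc_x s hs.1).sub (hfc_x t₀ ht₀)).div_const _).aestronglyMeasurable
    · filter_upwards [hnear] with s hs
      exact Eventually.of_forall fun x hx => hslope x (hIoc hx) s hs.1 hs.2
    · refine Eventually.of_forall fun x hx => ?_
      exact hasDerivWithinAt_iff_tendsto_slope.1 (hf x (hIoc hx) t₀ ht₀)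
  refine hlim.congr' ?_
  filter_upwards [self_mem_nhdsWithin] with s hs
  simp only [slope_def_field]
  rw [← integral_sub (hfc_x s hs.1) (hfc_x t₀ ht₀), intervalIntegral.integral_div]

theorem continuousOn_prod_intervalIntegral_tail {f : ℝ → ℝ → ℝ} {a b t₁ : ℝ} (hab : a ≤ b)
    (hf : ContinuousOn (fun p : ℝ × ℝ => f p.1 p.2) (Icc a b ×ˢ Ici t₁)) :
    ContinuousOn (fun p : ℝ × ℝ => ∫ y in p.1..b, f y p.2) (Icc a b ×ˢ Ici t₁) := by
  -- extend `f` continuously to the whole plane by clamping both variables into the box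
  set g : ℝ × ℝ → ℝ → ℝ := fun p y => f (max a (min y b)) (max t₁ p.2)
  have hg : Continuous (Function.uncurry g) :=
    hf.comp_continuous (f := fun q : (ℝ × ℝ) × ℝ => (max a (min q.2 b), max t₁ q.1.2))
      (by fun_prop) fun _ =>
        ⟨⟨le_max_left _ _, max_le hab (min_le_right _ _)⟩, mem_Ici.2 (le_max_left _ _)⟩
  have hcont : Continuous fun p : ℝ × ℝ => ∫ y in p.1..b, g p y :=
    (continuous_parametric_intervalIntegral_of_continuous (μ := volume) (a₀ := b) hg
      continuous_fst).neg.congr fun p => (integral_symm _ _).symm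
  refine hcont.continuousOn.congr fun p hp => integral_congr fun y hy => ?_
  rw [uIcc_of_le hp.1.2] at hy
  simp only [g, max_eq_right (mem_Ici.1 hp.2), min_eq_left hy.2, max_eq_right (hp.1.1.trans hy.1)]

theorem continuousOn_intervalIntegral_tail {f : ℝ → ℝ} {a b : ℝ} (hab : a ≤ b)
    (hf : ContinuousOn f (Icc a b)) : ContinuousOn (fun x => ∫ y in x..b, f y) (Icc a b) :=
  uIcc_of_le hab ▸ continuousOn_primitive_interval_left (μ := volume)
    (uIcc_of_le hab ▸ hf.integrableOn_Icc)

theorem hasDerivAt_intervalIntegral_tail {f : ℝ → ℝ} {a b x : ℝ} (hf : ContinuousOn f (Icc a b))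
    (hx : x ∈ Ioo a b) : HasDerivAt (fun y => ∫ s in y..b, f s) (-f x) x :=
  integral_hasDerivAt_left
    ((hf.mono (Icc_subset_Icc_left hx.1.le)).intervalIntegrable_of_Icc hx.2.le)
    ((hf.mono Ioo_subset_Icc_self).stronglyMeasurableAtFilter isOpen_Ioo x hx)
    (hf.continuousAt (Icc_mem_nhds hx.1 hx.2))

theorem intervalIntegral_eq_add_sub_of_eq_add_deriv {f g G G' : ℝ → ℝ} {a b : ℝ} (hab : a ≤ b)
    (hfg : ∀ x ∈ Icc a b, f x = g x + G' x) (hg : IntervalIntegrable g volume a b)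
    (hG : ContinuousOn G (Icc a b)) (hG' : ∀ x ∈ Ioo a b, HasDerivAt G (G' x) x)
    (hG'i : IntervalIntegrable G' volume a b) :
    ∫ x in a..b, f x = (∫ x in a..b, g x) + (G b - G a) := by
  rw [integral_congr fun x hx => hfg x (uIcc_of_le hab ▸ hx), integral_add hg hG'i,
    integral_eq_sub_of_hasDerivAt_of_le hab hG hG' hG'i]

theorem sq_intervalIntegral_le {f : ℝ → ℝ} {a b : ℝ} (hab : a ≤ b)
    (hf : IntervalIntegrable f volume a b)
    (hf2 : IntervalIntegrable (fun x => f x ^ 2) volume a b) :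
    (∫ x in a..b, f x) ^ 2 ≤ (b - a) * ∫ x in a..b, f x ^ 2 := by
  set I := ∫ x in a..b, f x
  -- expand `0 ≤ ∫ ((b - a) f - I)²`
  have hexpand : ∫ x in a..b, ((b - a) * f x - I) ^ 2
      = (b - a) * ((b - a) * (∫ x in a..b, f x ^ 2) - I ^ 2) := by
    have h : ∀ x, ((b - a) * f x - I) ^ 2
        = (b - a) ^ 2 * f x ^ 2 - 2 * (b - a) * I * f x + I ^ 2 := fun x => by ring
    simp_rw [h]
    rw [integral_add ((hf2.const_mul _).sub (hf.const_mul _)) intervalIntegrable_const,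
      integral_sub (hf2.const_mul _) (hf.const_mul _), intervalIntegral.integral_const_mul,
      intervalIntegral.integral_const_mul, intervalIntegral.integral_const, smul_eq_mul]
    ring
  have hnonneg : 0 ≤ (b - a) * ((b - a) * (∫ x in a..b, f x ^ 2) - I ^ 2) :=
    hexpand ▸ integral_nonneg hab fun x _ => sq_nonneg _
  rcases hab.eq_or_lt with rfl | hlt
  · simp [I]
  · nlinarith [(mul_nonneg_iff_of_pos_left (sub_pos.2 hlt)).1 hnonneg]

theorem intervalIntegral_sq_tail_le {f : ℝ → ℝ} {a b : ℝ} (hab : a ≤ b)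
    (hf : ContinuousOn f (Icc a b)) :
    ∫ x in a..b, (∫ y in x..b, f y) ^ 2 ≤ (b - a) ^ 2 * ∫ x in a..b, f x ^ 2 := by
  have hf2 : ContinuousOn (fun x => f x ^ 2) (Icc a b) := hf.pow 2
  have htail : ∀ x ∈ Icc a b, (∫ y in x..b, f y) ^ 2 ≤ (b - a) * ∫ x in a..b, f x ^ 2 := by
    intro x hx
    have hsub : Icc x b ⊆ Icc a b := Icc_subset_Icc_left hx.1
    have hsplit := integral_add_adjacent_intervals (μ := volume)
      ((hf2.mono (Icc_subset_Icc_right hx.2)).intervalIntegrable_of_Icc hx.1)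
      ((hf2.mono hsub).intervalIntegrable_of_Icc hx.2)
    have hhead_nonneg : 0 ≤ ∫ y in a..x, f y ^ 2 := integral_nonneg hx.1 fun _ _ => sq_nonneg _
    have htail_nonneg : 0 ≤ ∫ y in x..b, f y ^ 2 := integral_nonneg hx.2 fun _ _ => sq_nonneg _
    calc (∫ y in x..b, f y) ^ 2 ≤ (b - x) * ∫ y in x..b, f y ^ 2 :=
          sq_intervalIntegral_le hx.2 ((hf.mono hsub).intervalIntegrable_of_Icc hx.2)
            ((hf2.mono hsub).intervalIntegrable_of_Icc hx.2)
      _ ≤ (b - a) * ∫ x in a..b, f x ^ 2 := by rw [← hsplit]; nlinarith [hx.1]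
  have hmono := integral_mono_on (μ := volume) hab
    (((continuousOn_intervalIntegral_tail hab hf).fun_pow 2).intervalIntegrable_of_Icc hab)
    intervalIntegrable_const htail
  rw [intervalIntegral.integral_const, smul_eq_mul] at hmono
  linarith

theorem closure_Ioo_prod_Ioi {a b t₁ : ℝ} (hab : a < b) :
    closure (Ioo a b ×ˢ Ioi t₁) = Icc a b ×ˢ Ici t₁ := by
  rw [closure_prod_eq, closure_Ioo hab.ne, closure_Ioi]

namespace IsGKSolution

variable {l ρ c τq μ2 k : ℝ} {T q Tt Tx qt qx qxx : ℝ → ℝ → ℝ}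

theorem pde1_of_mem_Icc (hgk : IsGKSolution l ρ c τq μ2 k T q Tt Tx qt qx qxx) (hl : 0 < l)
    {x t : ℝ} (hx : x ∈ Icc 0 l) (ht : 0 ≤ t) : ρ * c * Tt x t + qx x t = 0 := by
  have := hgk.contTt; have := hgk.contqx
  refine Set.EqOn.of_subset_closure (f := fun p : ℝ × ℝ => ρ * c * Tt p.1 p.2 + qx p.1 p.2)
    (g := 0) (fun p hp => hgk.pde1 p.1 hp.1 p.2 hp.2) (by fun_prop) continuousOn_const
    (prod_mono Ioo_subset_Icc_self Ioi_subset_Ici_self) (closure_Ioo_prod_Ioi hl).ge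
    (mk_mem_prod hx ht)

theorem pde2_of_mem_Icc (hgk : IsGKSolution l ρ c τq μ2 k T q Tt Tx qt qx qxx) (hl : 0 < l)
    {x t : ℝ} (hx : x ∈ Icc 0 l) (ht : 0 ≤ t) :
    τq * qt x t + q x t - μ2 * qxx x t + k * Tx x t = 0 := by
  have := hgk.contqt; have := hgk.contq; have := hgk.contqxx; have := hgk.contTx
  refine Set.EqOn.of_subset_closure
    (f := fun p : ℝ × ℝ => τq * qt p.1 p.2 + q p.1 p.2 - μ2 * qxx p.1 p.2 + k * Tx p.1 p.2)
    (g := 0) (fun p hp => hgk.pde2 p.1 hp.1 p.2 hp.2) (by fun_prop) continuousOn_const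
    (prod_mono Ioo_subset_Icc_self Ioi_subset_Ici_self) (closure_Ioo_prod_Ioi hl).ge
    (mk_mem_prod hx ht)

theorem hasDerivWithinAt_tailIntegral (hgk : IsGKSolution l ρ c τq μ2 k T q Tt Tx qt qx qxx)
    (hl : 0 < l) (hρ : ρ ≠ 0) (hc : c ≠ 0) {x t : ℝ} (hx : x ∈ Icc 0 l) (ht : 0 ≤ t) :
    HasDerivWithinAt (fun s => ∫ y in x..l, T y s) (q x t / (ρ * c)) (Ici 0) t := by
  have hsub : Icc x l ⊆ Icc 0 l := Icc_subset_Icc_left hx.1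
  refine (hasDerivWithinAt_intervalIntegral_Ici hx.2 ht
    (fun y hy s hs => hgk.hTt y (hsub hy) s hs) (hgk.contT.mono (prod_mono hsub subset_rfl))
    (hgk.contTt.mono (prod_mono hsub subset_rfl))).congr_deriv ?_
  have hflux : ∫ y in x..l, qx y t = q l t - q x t :=
    integral_eq_sub_of_hasDerivAt_of_le hx.2 ((hgk.contq.uncurry_right t ht).mono hsub)
      (fun y hy => (hgk.hqx y ⟨hx.1.trans hy.1.le, hy.2.le⟩ t ht).hasDerivAt
        (Icc_mem_nhds (hx.1.trans_lt hy.1) hy.2))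
      (((hgk.contqx.uncurry_right t ht).mono hsub).intervalIntegrable_of_Icc hx.2)
  have hTt : ∫ y in x..l, Tt y t = ∫ y in x..l, -qx y t / (ρ * c) := by
    refine integral_congr fun y hy => ?_
    rw [uIcc_of_le hx.2] at hy
    field_simp
    linear_combination hgk.pde1_of_mem_Icc hl ⟨hx.1.trans hy.1, hy.2⟩ ht
  rw [hTt, intervalIntegral.integral_div, intervalIntegral.integral_neg, hflux, hgk.bcl t ht]
  ring

theorem hasDerivWithinAt_gkEnergy (hgk : IsGKSolution l ρ c τq μ2 k T q Tt Tx qt qx qxx)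
    (hl : 0 < l) (hk : k ≠ 0) {t : ℝ} (ht : 0 ≤ t) :
    HasDerivWithinAt (gkEnergy l ρ c τq k T q)
      (-((∫ x in 0..l, q x t ^ 2) + μ2 * ∫ x in 0..l, qx x t ^ 2) / k) (Ici 0) t := by
  have := hgk.contT; have := hgk.contq; have := hgk.contTt; have := hgk.contqt
  have hT := hasDerivWithinAt_intervalIntegral_Ici (f := fun x s => T x s ^ 2)
    (f' := fun x s => 2 * T x s * Tt x s) hl.le ht
    (fun x hx s hs => by simpa using (hgk.hTt x hx s hs).fun_pow 2) (by fun_prop) (by fun_prop)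
  have hq := hasDerivWithinAt_intervalIntegral_Ici (f := fun x s => q x s ^ 2)
    (f' := fun x s => 2 * q x s * qt x s) hl.le ht
    (fun x hx s hs => by simpa using (hgk.hqt x hx s hs).fun_pow 2) (by fun_prop) (by fun_prop)
  refine ((hT.const_mul (ρ * c / 2)).add (hq.const_mul (τq / (2 * k)))).congr_deriv ?_
  have := hgk.contT.uncurry_right t ht; have := hgk.contq.uncurry_right t ht
  have := hgk.contTt.uncurry_right t ht; have := hgk.contqt.uncurry_right t ht
  have := hgk.contTx.uncurry_right t ht; have := hgk.contqx.uncurry_right t ht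
  have := hgk.contqxx.uncurry_right t ht
  rw [← intervalIntegral.integral_const_mul, ← intervalIntegral.integral_const_mul,
    ← integral_add (ContinuousOn.intervalIntegrable_of_Icc hl.le (by fun_prop))
      (ContinuousOn.intervalIntegrable_of_Icc hl.le (by fun_prop)),
    intervalIntegral_eq_add_sub_of_eq_add_deriv
      (g := fun x => -(q x t ^ 2 + μ2 * qx x t ^ 2) / k)
      (G := fun x => μ2 / k * (q x t * qx x t) - T x t * q x t)
      (G' := fun x => μ2 / k * (qx x t * qx x t + q x t * qxx x t)
        - (Tx x t * q x t + T x t * qx x t)) hl.le ?_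
      (ContinuousOn.intervalIntegrable_of_Icc hl.le (by fun_prop)) (by fun_prop) ?_
      (ContinuousOn.intervalIntegrable_of_Icc hl.le (by fun_prop))]
  · rw [intervalIntegral.integral_div, intervalIntegral.integral_neg,
      integral_add (ContinuousOn.intervalIntegrable_of_Icc hl.le (by fun_prop))
        (ContinuousOn.intervalIntegrable_of_Icc hl.le (by fun_prop)),
      intervalIntegral.integral_const_mul, hgk.bc0 t ht, hgk.bcl t ht]
    ring
  · intro x hx
    field_simp
    linear_combination
      k * T x t * hgk.pde1_of_mem_Icc hl hx ht + q x t * hgk.pde2_of_mem_Icc hl hx ht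
  · intro x hx
    have hx' := Ioo_subset_Icc_self hx
    have hTx := (hgk.hTx x hx' t ht).hasDerivAt (Icc_mem_nhds hx.1 hx.2)
    have hqx := (hgk.hqx x hx' t ht).hasDerivAt (Icc_mem_nhds hx.1 hx.2)
    have hqxx := (hgk.hqxx x hx' t ht).hasDerivAt (Icc_mem_nhds hx.1 hx.2)
    exact ((hqx.mul hqxx).const_mul _).sub (hTx.mul hqx)

theorem hasDerivWithinAt_gkF (hgk : IsGKSolution l ρ c τq μ2 k T q Tt Tx qt qx qxx)
    (hl : 0 < l) (hρ : ρ ≠ 0) (hc : c ≠ 0) {t : ℝ} (ht : 0 ≤ t) :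
    HasDerivWithinAt (gkF l ρ c τq μ2 T q)
      (-k * (∫ x in 0..l, T x t ^ 2) + τq / (ρ * c) * (∫ x in 0..l, q x t ^ 2)
        - gkCT l μ2 k T qx t) (Ici 0) t := by
  set u : ℝ → ℝ → ℝ := fun x s => ∫ y in x..l, T y s
  have := hgk.contT; have := hgk.contq; have := hgk.contTt; have := hgk.contqt
  have : ContinuousOn (fun p : ℝ × ℝ => u p.1 p.2) (Icc 0 l ×ˢ Ici 0) :=
    continuousOn_prod_intervalIntegral_tail hl.le hgk.contT
  have hU := hasDerivWithinAt_intervalIntegral_Ici (f := fun x s => u x s ^ 2)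
    (f' := fun x s => 2 * u x s * (q x s / (ρ * c))) hl.le ht
    (fun x hx s hs => by
      simpa using (hgk.hasDerivWithinAt_tailIntegral hl hρ hc hx hs).fun_pow 2)
    (by fun_prop) (by fun_prop)
  have hT := hasDerivWithinAt_intervalIntegral_Ici (f := fun x s => T x s ^ 2)
    (f' := fun x s => 2 * T x s * Tt x s) hl.le ht
    (fun x hx s hs => by simpa using (hgk.hTt x hx s hs).fun_pow 2) (by fun_prop) (by fun_prop)
  have hqU := hasDerivWithinAt_intervalIntegral_Ici (f := fun x s => q x s * u x s)
    (f' := fun x s => qt x s * u x s + q x s * (q x s / (ρ * c))) hl.le ht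
    (fun x hx s hs =>
      (hgk.hqt x hx s hs).mul (hgk.hasDerivWithinAt_tailIntegral hl hρ hc hx hs))
    (by fun_prop) (by fun_prop)
  refine (((hU.const_mul (ρ * c / 2)).add (hT.const_mul (ρ * c * μ2 / 2))).add
    (hqU.const_mul τq)).congr_deriv ?_
  have := hgk.contT.uncurry_right t ht; have := hgk.contq.uncurry_right t ht
  have := hgk.contTt.uncurry_right t ht; have := hgk.contqt.uncurry_right t ht
  have := hgk.contTx.uncurry_right t ht; have := hgk.contqx.uncurry_right t ht
  have := hgk.contqxx.uncurry_right t ht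
  have := ContinuousOn.uncurry_right (f := u) t ht
    (continuousOn_prod_intervalIntegral_tail hl.le hgk.contT)
  rw [← intervalIntegral.integral_const_mul, ← intervalIntegral.integral_const_mul,
    ← intervalIntegral.integral_const_mul,
    ← integral_add (ContinuousOn.intervalIntegrable_of_Icc hl.le (by fun_prop))
      (ContinuousOn.intervalIntegrable_of_Icc hl.le (by fun_prop)),
    ← integral_add (ContinuousOn.intervalIntegrable_of_Icc hl.le (by fun_prop))
      (ContinuousOn.intervalIntegrable_of_Icc hl.le (by fun_prop)),
    intervalIntegral_eq_add_sub_of_eq_add_deriv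
      (g := fun x => -k * T x t ^ 2 + τq / (ρ * c) * q x t ^ 2)
      (G := fun x => μ2 * (qx x t * u x t) - k * (T x t * u x t))
      (G' := fun x => μ2 * (qxx x t * u x t + qx x t * -T x t)
        - k * (Tx x t * u x t + T x t * -T x t)) hl.le ?_
      (ContinuousOn.intervalIntegrable_of_Icc hl.le (by fun_prop)) (by fun_prop) ?_
      (ContinuousOn.intervalIntegrable_of_Icc hl.le (by fun_prop))]
  · rw [integral_add (ContinuousOn.intervalIntegrable_of_Icc hl.le (by fun_prop))
        (ContinuousOn.intervalIntegrable_of_Icc hl.le (by fun_prop)),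
      intervalIntegral.integral_const_mul, intervalIntegral.integral_const_mul]
    simp only [u, integral_same, gkCT]
    ring
  · intro x hx
    field_simp
    linear_combination ρ * c *
      (μ2 * T x t * hgk.pde1_of_mem_Icc hl hx ht + u x t * hgk.pde2_of_mem_Icc hl hx ht)
  · intro x hx
    have hx' := Ioo_subset_Icc_self hx
    have hTx := (hgk.hTx x hx' t ht).hasDerivAt (Icc_mem_nhds hx.1 hx.2)
    have hqxx := (hgk.hqxx x hx' t ht).hasDerivAt (Icc_mem_nhds hx.1 hx.2)
    have hu := hasDerivAt_intervalIntegral_tail (hgk.contT.uncurry_right t ht) hx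
    exact ((hqxx.mul hu).const_mul _).sub ((hTx.mul hu).const_mul _)

theorem hasDerivWithinAt_gkL (hgk : IsGKSolution l ρ c τq μ2 k T q Tt Tx qt qx qxx)
    (hl : 0 < l) (hρ : ρ ≠ 0) (hc : c ≠ 0) (hk : k ≠ 0) {t : ℝ} (ht : 0 ≤ t) :
    HasDerivWithinAt (gkL l ρ c τq μ2 k T q)
      (-(2 * (l ^ 2 + μ2) / k) * (∫ x in 0..l, q x t ^ 2)
        - (2 * l ^ 2 + 2 * μ2 + τq * k / (ρ * c)) * μ2 / k * (∫ x in 0..l, qx x t ^ 2)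
        - k * (∫ x in 0..l, T x t ^ 2) - gkCT l μ2 k T qx t) (Ici 0) t :=
  (((hgk.hasDerivWithinAt_gkEnergy hl hk ht).const_mul _).add
    (hgk.hasDerivWithinAt_gkF hl hρ hc ht)).congr_deriv (by field_simp; ring)

end IsGKSolution

theorem gkF_le_mul_gkEnergy {l ρ c τq μ2 k t : ℝ} {T q : ℝ → ℝ → ℝ}
    (hl : 0 < l) (hρ : 0 < ρ) (hc : 0 < c)
    (hτq : 0 ≤ τq) (hμ2 : 0 ≤ μ2) (hk : 0 < k) (hT : ContinuousOn (fun x => T x t) (Icc 0 l))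
    (hq : ContinuousOn (fun x => q x t) (Icc 0 l)) :
    gkF l ρ c τq μ2 T q t ≤ (l ^ 2 + μ2 + τq * k / (ρ * c)) * gkEnergy l ρ c τq k T q t := by
  have hu := continuousOn_intervalIntegral_tail hl.le hT
  set A := ∫ x in 0..l, T x t ^ 2
  set B := ∫ x in 0..l, q x t ^ 2
  set U := ∫ x in 0..l, (∫ y in x..l, T y t) ^ 2
  have hB : 0 ≤ B := integral_nonneg hl.le fun _ _ => sq_nonneg _
  have hUA : U ≤ l ^ 2 * A := by simpa using intervalIntegral_sq_tail_le hl.le hT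
  have hyoung : ∫ x in 0..l, q x t * ∫ y in x..l, T y t
      ≤ l ^ 2 / (2 * k) * B + k / (2 * l ^ 2) * U := by
    have hpt : ∀ x ∈ Icc 0 l, q x t * (∫ y in x..l, T y t)
        ≤ l ^ 2 / (2 * k) * q x t ^ 2 + k / (2 * l ^ 2) * (∫ y in x..l, T y t) ^ 2 := by
      intro x _
      have hsq : 0 ≤ (l ^ 2 * q x t - k * ∫ y in x..l, T y t) ^ 2 / (2 * k * l ^ 2) := by
        positivity
      have : l ^ 2 / (2 * k) * q x t ^ 2 + k / (2 * l ^ 2) * (∫ y in x..l, T y t) ^ 2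
          - q x t * (∫ y in x..l, T y t)
          = (l ^ 2 * q x t - k * ∫ y in x..l, T y t) ^ 2 / (2 * k * l ^ 2) := by
        field_simp; ring
      linarith
    refine (integral_mono_on hl.le (ContinuousOn.intervalIntegrable_of_Icc hl.le (by fun_prop))
      (ContinuousOn.intervalIntegrable_of_Icc hl.le (by fun_prop)) hpt).trans_eq ?_
    rw [integral_add (ContinuousOn.intervalIntegrable_of_Icc hl.le (by fun_prop))
        (ContinuousOn.intervalIntegrable_of_Icc hl.le (by fun_prop)),
      intervalIntegral.integral_const_mul, intervalIntegral.integral_const_mul]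
  calc gkF l ρ c τq μ2 T q t
      = ρ * c / 2 * U + ρ * c * μ2 / 2 * A + τq * ∫ x in 0..l, q x t * ∫ y in x..l, T y t := rfl
    _ ≤ ρ * c / 2 * (l ^ 2 * A) + ρ * c * μ2 / 2 * A
        + τq * (l ^ 2 / (2 * k) * B + k / (2 * l ^ 2) * (l ^ 2 * A)) := by
      gcongr
      exact hyoung.trans (by gcongr)
    _ ≤ (l ^ 2 + μ2 + τq * k / (ρ * c)) * gkEnergy l ρ c τq k T q t := by
      have hgap : (l ^ 2 + μ2 + τq * k / (ρ * c)) * (ρ * c / 2 * A + τq / (2 * k) * B)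
          - (ρ * c / 2 * (l ^ 2 * A) + ρ * c * μ2 / 2 * A
            + τq * (l ^ 2 / (2 * k) * B + k / (2 * l ^ 2) * (l ^ 2 * A)))
          = (μ2 + τq * k / (ρ * c)) * τq / (2 * k) * B := by
        field_simp; ring
      have : 0 ≤ (μ2 + τq * k / (ρ * c)) * τq / (2 * k) * B := by positivity
      unfold gkEnergy
      linarith

theorem gkL_le_mul_gkEnergy {l ρ c τq μ2 k t : ℝ} {T q : ℝ → ℝ → ℝ}
    (hl : 0 < l) (hρ : 0 < ρ) (hc : 0 < c)
    (hτq : 0 ≤ τq) (hμ2 : 0 ≤ μ2) (hk : 0 < k) (hT : ContinuousOn (fun x => T x t) (Icc 0 l))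
    (hq : ContinuousOn (fun x => q x t) (Icc 0 l)) :
    gkL l ρ c τq μ2 k T q t
      ≤ (3 * l ^ 2 + 3 * μ2 + 2 * (τq * k / (ρ * c))) * gkEnergy l ρ c τq k T q t := by
  have := gkF_le_mul_gkEnergy hl hρ hc hτq hμ2 hk hT hq
  unfold gkL
  linarith

theorem mul_gkEnergy_le {l ρ c τq μ2 k β t : ℝ} {T q : ℝ → ℝ → ℝ} (hl : 0 ≤ l) (hρc : 0 < ρ * c)
    (hτq : 0 < τq) (hk : 0 < k) (hβ₁ : β ≤ 2 * k / (ρ * c)) (hβ₂ : β ≤ 4 * (l ^ 2 + μ2) / τq) :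
    β * gkEnergy l ρ c τq k T q t
      ≤ k * (∫ x in 0..l, T x t ^ 2) + 2 * (l ^ 2 + μ2) / k * (∫ x in 0..l, q x t ^ 2) := by
  have h₁ : β * (ρ * c / 2) ≤ k := by
    have := (le_div_iff₀ hρc).1 hβ₁
    linarith
  have h₂ : β * (τq / (2 * k)) ≤ 2 * (l ^ 2 + μ2) / k := by
    have := (le_div_iff₀ hτq).1 hβ₂
    rw [mul_div_assoc', div_le_div_iff₀ (by positivity) hk]
    nlinarith
  calc β * gkEnergy l ρ c τq k T q t
      = β * (ρ * c / 2) * (∫ x in 0..l, T x t ^ 2)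
        + β * (τq / (2 * k)) * (∫ x in 0..l, q x t ^ 2) := by
        unfold gkEnergy; ring
    _ ≤ _ := by
      gcongr
      · exact integral_nonneg hl fun _ _ => sq_nonneg _
      · exact integral_nonneg hl fun _ _ => sq_nonneg _

/-- for a classical solution of the Guyer–Krumhansl system, with
`β = min(2k/(ρc), 4(l²+μ²)/τ_q)` and `ω = β/(3l²+3μ²+2τ_q k/(ρc))`, the Lyapunov
functional is differentiable and satisfies `𝓛'(t) ≤ −ω 𝓛(t) + |C_T(t)|` for all
`t ≥ 0`. -/
theorem gk_lyapunov_decay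
    (l ρ c τq μ2 k : ℝ) (hl : 0 < l) (hρ : 0 < ρ) (hc : 0 < c)
    (hτq : 0 < τq) (hμ2 : 0 < μ2) (hk : 0 < k)
    (T q Tt Tx qt qx qxx : ℝ → ℝ → ℝ)
    (hgk : IsGKSolution l ρ c τq μ2 k T q Tt Tx qt qx qxx)
    (β ω : ℝ)
    (hβ : β = min (2 * k / (ρ * c)) (4 * (l ^ 2 + μ2) / τq))
    (hω : ω = β / (3 * l ^ 2 + 3 * μ2 + 2 * (τq * k / (ρ * c)))) :
    ∀ t : ℝ, 0 ≤ t →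
      ∃ L' : ℝ, HasDerivWithinAt (gkL l ρ c τq μ2 k T q) L' (Ici (0:ℝ)) t
        ∧ L' ≤ -ω * gkL l ρ c τq μ2 k T q t + |gkCT l μ2 k T qx t| := by
  intro t ht
  refine ⟨_, hgk.hasDerivWithinAt_gkL hl hρ.ne' hc.ne' hk.ne' ht, ?_⟩
  have hω₀ : 0 ≤ ω := by rw [hω, hβ]; positivity
  have hωL : ω * gkL l ρ c τq μ2 k T q t ≤ β * gkEnergy l ρ c τq k T q t := by
    calc ω * gkL l ρ c τq μ2 k T q t
        ≤ ω * ((3 * l ^ 2 + 3 * μ2 + 2 * (τq * k / (ρ * c))) * gkEnergy l ρ c τq k T q t) :=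
          mul_le_mul_of_nonneg_left (gkL_le_mul_gkEnergy hl hρ hc hτq.le hμ2.le hk
            (hgk.contT.uncurry_right t ht) (hgk.contq.uncurry_right t ht)) hω₀
      _ = β * gkEnergy l ρ c τq k T q t := by rw [hω]; field_simp
  have hβE := mul_gkEnergy_le (t := t) (T := T) (q := q) hl.le (mul_pos hρ hc) hτq hk
    (hβ ▸ min_le_left _ _) (hβ ▸ min_le_right _ _)
  have hqx : 0 ≤ (2 * l ^ 2 + 2 * μ2 + τq * k / (ρ * c)) * μ2 / k * ∫ x in 0..l, qx x t ^ 2 :=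
    mul_nonneg (by positivity) (integral_nonneg hl.le fun _ _ => sq_nonneg _)
  linarith [neg_le_abs (gkCT l μ2 k T qx t)]
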